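/- Consider the rewriting system ℜ'' for the figure-eight knot group on the alphabet {s₀, s₄, s₅, t₁, t₂, t₃} and formal inverses, with rules: t₂ → t₁⁻¹s₄; t₃ → t₂⁻¹s₅; t₁ → t₃⁻¹s₅; s₄t₁⁻¹ → t₁⁻¹s₄s₅⁻¹; s₄t₂⁻¹ → t₃⁻¹s₅; s₅t₃⁻¹ → t₁⁻¹s₄; s₅t₁⁻¹ → t₂⁻¹s₅; s₄⁻¹t₁⁻¹ → t₁⁻¹s₅s₄⁻¹; t₂⁻¹t₁⁻¹ → s₄⁻¹; t₃⁻¹t₂⁻¹ → s₅⁻¹; t₁⁻¹t₃⁻¹ → s₅⁻¹; s₅t₂⁻¹ → t₃⁻¹s₅s₄⁻¹; s₄⁻¹t₃⁻¹ → t₂⁻¹s₅⁻¹; s₅⁻¹t₂⁻¹ → t₁⁻¹s₅⁻¹; s₅⁻¹t₁⁻¹ → t₃⁻¹s₄⁻¹; s₅⁻¹t₃⁻¹ → t₂⁻¹s₄s₅⁻¹; together with all free-cancellation rules aā → ε and āa → ε. This rewriting system is terminating. -/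

import Mathlib

/-- The alphabet of the rewriting system ℜ'' for the figure-eight knot group:
the generators s₀, s₄, s₅, t₁, t₂, t₃ and their formal inverses. -/
inductive L8 where
  | s0 | s4 | s5 | t1 | t2 | t3 | is0 | is4 | is5 | it1 | it2 | it3
deriving DecidableEq

open L8

/-- Formal inversion on the alphabet. -/
def inv8 : L8 → L8
  | s0 => is0 | is0 => s0 | s4 => is4 | is4 => s4 | s5 => is5 | is5 => s5
  | t1 => it1 | it1 => t1 | t2 => it2 | it2 => t2 | t3 => it3 | it3 => t3

/-- The rules of ℜ'' for the figure-eight knot group, together with all free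
cancellation rules. -/
def R8 : Set (List L8 × List L8) :=
  {([t2], [it1, s4]), ([t3], [it2, s5]), ([t1], [it3, s5]),
   ([s4, it1], [it1, s4, is5]),
   ([s4, it2], [it3, s5]), ([s5, it3], [it1, s4]), ([s5, it1], [it2, s5]),
   ([is4, it1], [it1, s5, is4]),
   ([it2, it1], [is4]), ([it3, it2], [is5]), ([it1, it3], [is5]),
   ([s5, it2], [it3, s5, is4]),
   ([is4, it3], [it2, is5]), ([is5, it2], [it1, is5]), ([is5, it1], [it3, is4]),
   ([is5, it3], [it2, s4, is5])} ∪
  {p | ∃ a : L8, p = ([a, inv8 a], ([] : List L8))} ∪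
  {p | ∃ a : L8, p = ([inv8 a, a], ([] : List L8))}

/-!
Every rule decreases, lexicographically, the triple (number of letters `t`, number of letters
`t⁻¹`, sum over the `s`-letters of `3 ^ k`, with `k` the number of `t⁻¹`-letters to the right of
that `s`-letter), and this decrease survives putting the rule into any context `u _ v`. The rules
rewriting a `t`, the rules `t⁻¹ t⁻¹ → s⁻¹` and the free cancellations of `t`'s lower one of the
counts, those of `s`'s delete two `s`-letters; each remaining rule moves one `s`-letter to the right
past a `t⁻¹` and creates at most one new `s`-letter there, and `2 · 3 ^ k < 3 ^ (k + 1)`.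
-/

variable {α : Type*}

def RewriteStep (R : Set (List α × List α)) (x y : List α) : Prop :=
  ∃ u v l r, (l, r) ∈ R ∧ x = u ++ l ++ v ∧ y = u ++ r ++ v

theorem wellFounded_rewriteStep_of_measure {β : Type*} [Preorder β] [WellFoundedLT β]
    {R : Set (List α × List α)} (μ : List α → β)
    (hμ : ∀ u v l r, (l, r) ∈ R → μ (u ++ r ++ v) < μ (u ++ l ++ v)) :
    WellFounded (flip (RewriteStep R)) :=
  Subrelation.wf (by rintro y x ⟨u, v, l, r, hlr, rfl, rfl⟩; exact hμ u v l r hlr)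
    (InvImage.wf μ wellFounded_lt)

section WeightedCount

variable (c p q : α → Bool) (b : ℕ)

def weightedCount : List α → ℕ
  | [] => 0
  | a :: w => (if p a then b ^ w.countP q else 0) + weightedCount w

theorem weightedCount_append (u v : List α) :
    weightedCount p q b (u ++ v) =
      weightedCount p q b u * b ^ v.countP q + weightedCount p q b v := by
  induction u with
  | nil => simp [weightedCount]
  | cons a u ih =>
    simp only [List.cons_append, weightedCount, ih, List.countP_append, pow_add]
    split_ifs <;> ring

def lexMeasure (w : List α) : ℕ ×ₗ ℕ ×ₗ ℕ :=
  toLex (w.countP c, toLex (w.countP q, weightedCount p q b w))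

variable {b} in
theorem lexMeasure_append_lt_append (hb : 0 < b) {l r : List α}
    (h : lexMeasure c p q b r < lexMeasure c p q b l) (u v : List α) :
    lexMeasure c p q b (u ++ r ++ v) < lexMeasure c p q b (u ++ l ++ v) := by
  simp only [lexMeasure, Prod.Lex.toLex_lt_toLex, List.countP_append, weightedCount_append] at h ⊢
  rcases h with hc | ⟨hc, hq | ⟨hq, hw⟩⟩
  · omega
  · omega
  · refine Or.inr ⟨by omega, Or.inr ⟨by omega, ?_⟩⟩
    rw [hq]
    gcongr

end WeightedCount

def isT : L8 → Bool
  | t1 | t2 | t3 => true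
  | _ => false

def isTInv : L8 → Bool
  | it1 | it2 | it3 => true
  | _ => false

def isS : L8 → Bool
  | s0 | s4 | s5 | is0 | is4 | is5 => true
  | _ => false

abbrev figureEightMeasure : List L8 → ℕ ×ₗ ℕ ×ₗ ℕ := lexMeasure isT isS isTInv 3

theorem figureEightMeasure_lt_of_mem_R8 {l r : List L8} (h : (l, r) ∈ R8) :
    figureEightMeasure r < figureEightMeasure l := by
  simp only [R8, Set.mem_union, Set.mem_insert_iff, Set.mem_singleton_iff, Set.mem_ofPred_eq,
    Prod.mk.injEq] at h
  rcases h with (h | ⟨a, rfl, rfl⟩) | ⟨a, rfl, rfl⟩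
  · rcases h with ⟨rfl, rfl⟩ | ⟨rfl, rfl⟩ | ⟨rfl, rfl⟩ | ⟨rfl, rfl⟩ | ⟨rfl, rfl⟩ | ⟨rfl, rfl⟩ |
      ⟨rfl, rfl⟩ | ⟨rfl, rfl⟩ | ⟨rfl, rfl⟩ | ⟨rfl, rfl⟩ | ⟨rfl, rfl⟩ | ⟨rfl, rfl⟩ | ⟨rfl, rfl⟩ |
      ⟨rfl, rfl⟩ | ⟨rfl, rfl⟩ | ⟨rfl, rfl⟩ <;> decide
  all_goals cases a <;> decide

/-- The rewriting system ℜ'' for the figure-eight knot group is terminating. -/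
theorem stmt_12 :
    ¬ ∃ f : ℕ → List L8, ∀ n, ∃ u v l r,
      (l, r) ∈ R8 ∧ f n = u ++ l ++ v ∧ f (n + 1) = u ++ r ++ v := by
  rintro ⟨f, hf⟩
  have hwf : WellFounded (flip (RewriteStep R8)) :=
    wellFounded_rewriteStep_of_measure figureEightMeasure fun u v _ _ hlr =>
      lexMeasure_append_lt_append isT isS isTInv three_pos
        (figureEightMeasure_lt_of_mem_R8 hlr) u v
  exact (wellFounded_iff_isEmpty_descending_chain.mp hwf).false ⟨f, hf⟩
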